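/- Let n = n_x + 1 and let F = (G h) ∈ ℝ^{f×n} satisfy the block structure F = [[G_1, 0],[G_2, h_2]] with G_1 ∈ ℝ^{f_1×n_x}, G_2 ∈ ℝ^{f_2×n_x}, h_2 ∈ ℝ^{f_2}, f = f_1 + f_2, f_2 > 0, where every component of h_2 is strictly negative and G_1 x ≤ 0 implies x = 0. Let z = (z_1, z_2) ∈ ℝ^{f_1}×ℝ^{f_2} be such that P(z) := {(x,y) : Gx + hy ≤ z} is non-empty. Then the function M : ℝ^{n_x} → ℝ ∪ {∞} defined by M(x) = max_{i ∈ {1,…,f_2}} (z_2 − G_2 x)_i / (h_2)_i whenever G_1 x ≤ z_1, and M(x) = ∞ otherwise, satisfies epi(M) = P(z) (and hence is the unique proper compact convex function with this epigraph). -/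

import Mathlib

/-!
Since `h` vanishes on the first `f1` rows and is negative on the others, `(x, y) ∈ P(z)` says
exactly that `G₁x ≤ z₁` and `(z₂ - G₂x)ᵢ / (h₂)ᵢ ≤ y` for every `i`, i.e. `M x ≤ y`; so
`epi M = P(z)`, which is closed and convex as the preimage of an orthant under a linear map.
The domain `{x | G₁x ≤ z₁}` is bounded: the maximum of the rows of `G₁x` is continuous and, by
the hypothesis on `G₁`, positive on the compact unit sphere, hence at least `ε‖x‖` everywhere.
Uniqueness holds because an `EReal`-valued function is determined by its epigraph.
-/

open Matrix Set MeasureTheory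
open scoped Classical Pointwise

noncomputable section

def epiF {nx : ℕ} (M : (Fin nx → ℝ) → EReal) : Set ((Fin nx → ℝ) × ℝ) :=
  {p | M p.1 ≤ (p.2 : EReal)}

def domF {nx : ℕ} (M : (Fin nx → ℝ) → EReal) : Set (Fin nx → ℝ) :=
  {x | M x < ⊤}

def ProperCompactConvex {nx : ℕ} (M : (Fin nx → ℝ) → EReal) : Prop :=
  (∀ x, M x ≠ ⊥) ∧ (domF M).Nonempty ∧ IsCompact (domF M) ∧
    IsClosed (epiF M) ∧ Convex ℝ (epiF M)

def Pset {nx f : ℕ} (G : Matrix (Fin f) (Fin nx) ℝ) (h : Fin f → ℝ)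
    (z : Fin f → ℝ) : Set ((Fin nx → ℝ) × ℝ) :=
  {p | ∀ i, (G *ᵥ p.1) i + h i * p.2 ≤ z i}

def Kcone (nx : ℕ) : Set ((Fin nx → ℝ) × ℝ) := {p | p.1 = 0 ∧ 0 ≤ p.2}

def vertPt {nx f : ℕ} (R : Matrix (Fin nx) (Fin f) ℝ) (s : Fin f → ℝ)
    (z : Fin f → ℝ) : (Fin nx → ℝ) × ℝ := (R *ᵥ z, s ⬝ᵥ z)

def ConfigTriplet {nx f e v : ℕ} (G : Matrix (Fin f) (Fin nx) ℝ) (h : Fin f → ℝ)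
    (E : Matrix (Fin e) (Fin f) ℝ)
    (R : Fin v → Matrix (Fin nx) (Fin f) ℝ) (s : Fin v → Fin f → ℝ) : Prop :=
  ∀ z : Fin f → ℝ,
    Pset G h z = convexHull ℝ (Set.range fun i => vertPt (R i) (s i) z) + Kcone nx
      ↔ ∀ i, (E *ᵥ z) i ≤ 0

def PolyFamily {nx f e : ℕ} (G : Matrix (Fin f) (Fin nx) ℝ) (h : Fin f → ℝ)
    (E : Matrix (Fin e) (Fin f) ℝ) : Set (Set ((Fin nx → ℝ) × ℝ)) :=
  {P | ∃ z : Fin f → ℝ, (∀ i, (E *ᵥ z) i ≤ 0) ∧ P = Pset G h z}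

def indE {n : ℕ} (S : Set (Fin n → ℝ)) (x : Fin n → ℝ) : EReal :=
  if x ∈ S then 0 else ⊤

def IsLCLF {nx nu : ℕ} (A : Matrix (Fin nx) (Fin nx) ℝ) (B : Matrix (Fin nx) (Fin nu) ℝ)
    (𝕏 : Set (Fin nx → ℝ)) (𝕌 : Set (Fin nu → ℝ))
    (L : (Fin nx → ℝ) → (Fin nu → ℝ) → ℝ) (M : (Fin nx → ℝ) → EReal) : Prop :=
  M 0 = 0 ∧ (∀ x, x ≠ 0 → 0 < M x) ∧ ProperCompactConvex M ∧
    ∀ x, (⨅ u ∈ 𝕌, ((L x u : EReal) + indE 𝕏 x + M (A *ᵥ x + B *ᵥ u))) ≤ M x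

def RobustCLF {nx nu : ℕ}
    (𝔻 : Set (Matrix (Fin nx) (Fin nx) ℝ × Matrix (Fin nx) (Fin nu) ℝ × (Fin nx → ℝ)))
    (𝕏 : Set (Fin nx → ℝ)) (𝕌 : Set (Fin nu → ℝ))
    (L : (Fin nx → ℝ) → (Fin nu → ℝ) → ℝ) (M : (Fin nx → ℝ) → EReal) : Prop :=
  (∀ x, 0 ≤ M x) ∧ ProperCompactConvex M ∧ (∃ xs ∈ 𝕏, M xs = 0) ∧
    ∀ x, (⨅ u ∈ 𝕌, ⨆ d ∈ 𝔻,
      ((L x u : EReal) + indE 𝕏 x + M (d.1 *ᵥ x + d.2.1 *ᵥ u + d.2.2))) ≤ M x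

def IsRCI {nx nu : ℕ}
    (𝔻 : Set (Matrix (Fin nx) (Fin nx) ℝ × Matrix (Fin nx) (Fin nu) ℝ × (Fin nx → ℝ)))
    (𝕏 : Set (Fin nx → ℝ)) (𝕌 : Set (Fin nu → ℝ)) (X : Set (Fin nx → ℝ)) : Prop :=
  X ⊆ 𝕏 ∧ IsCompact X ∧ Convex ℝ X ∧
    ∀ x ∈ X, ∃ u ∈ 𝕌, ∀ d ∈ 𝔻, d.1 *ᵥ x + d.2.1 *ᵥ u + d.2.2 ∈ X

def LPSDwrt {nx nu : ℕ}
    (𝔻 : Set (Matrix (Fin nx) (Fin nx) ℝ × Matrix (Fin nx) (Fin nu) ℝ × (Fin nx → ℝ)))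
    (𝕌 : Set (Fin nu → ℝ)) (L : (Fin nx → ℝ) → (Fin nu → ℝ) → ℝ)
    (Xs : Set (Fin nx → ℝ)) : Prop :=
  ∀ x ∈ Xs, ∃ u ∈ 𝕌, L x u = 0 ∧ ∀ d ∈ 𝔻, d.1 *ᵥ x + d.2.1 *ᵥ u + d.2.2 ∈ Xs

def RobustLambdaContractive {nx nu : ℕ}
    (𝔻 : Set (Matrix (Fin nx) (Fin nx) ℝ × Matrix (Fin nx) (Fin nu) ℝ × (Fin nx → ℝ)))
    (𝕌 : Set (Fin nu → ℝ)) (Xs : Set (Fin nx → ℝ)) (lam : ℝ)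
    (X : Set (Fin nx → ℝ)) : Prop :=
  ∀ x ∈ X, ∃ u ∈ 𝕌, ∀ d ∈ 𝔻,
    d.1 *ᵥ x + d.2.1 *ᵥ u + d.2.2 ∈ lam • X + (1 - lam) • Xs

def Jcost {nx nu : ℕ} (A : Matrix (Fin nx) (Fin nx) ℝ) (B : Matrix (Fin nx) (Fin nu) ℝ)
    (𝕌 : Set (Fin nu → ℝ)) (X : Set (Fin nx → ℝ))
    (L : (Fin nx → ℝ) → (Fin nu → ℝ) → ℝ) (M : (Fin nx → ℝ) → EReal)
    (N : ℕ) (x0 : Fin nx → ℝ) : EReal :=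
  sInf {c : EReal | ∃ (xs : ℕ → (Fin nx → ℝ)) (us : ℕ → (Fin nu → ℝ)),
    xs 0 = x0 ∧
    (∀ k < N, us k ∈ 𝕌 ∧ xs k ∈ X ∧ xs (k + 1) = A *ᵥ xs k + B *ᵥ us k) ∧
    c = ((∑ k ∈ Finset.range N, L (xs k) (us k) : ℝ) : EReal) + M (xs N)}

def Dij {nx nu f : ℕ} (G : Matrix (Fin f) (Fin nx) ℝ)
    (𝔻 : Set (Matrix (Fin nx) (Fin nx) ℝ × Matrix (Fin nx) (Fin nu) ℝ × (Fin nx → ℝ)))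
    (xi : Fin nx → ℝ) (c : Fin nu → ℝ) (j : Fin f) : ℝ :=
  sSup ((fun d : Matrix (Fin nx) (Fin nx) ℝ × Matrix (Fin nx) (Fin nu) ℝ × (Fin nx → ℝ) =>
    (G *ᵥ (d.1 *ᵥ xi + d.2.1 *ᵥ c + d.2.2)) j) '' 𝔻)

/-- The explicit piecewise-affine formula from Remark 2. -/
def Mform {nx f : ℕ} (f1 : ℕ) (hf1 : f1 < f)
    (G : Matrix (Fin f) (Fin nx) ℝ) (h : Fin f → ℝ)
    (z : Fin f → ℝ) (x : Fin nx → ℝ) : EReal :=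
  if ∀ i : Fin f, (i : ℕ) < f1 → (G *ᵥ x) i ≤ z i then
    (((Finset.univ.filter fun i : Fin f => f1 ≤ (i : ℕ)).sup'
        ⟨⟨f1, hf1⟩, Finset.mem_filter.mpr ⟨Finset.mem_univ _, le_rfl⟩⟩
        fun i => (z i - (G *ᵥ x) i) / h i : ℝ) : EReal)
  else ⊤


section LinearInequalities

variable {E ι : Type*} [NormedAddCommGroup E] [NormedSpace ℝ E] [FiniteDimensional ℝ E]

theorem isBounded_setOf_forall_le_of_nonpos_imp_eq_zero (ℓ : ι → E →ₗ[ℝ] ℝ) (s : Finset ι)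
    (hℓ : ∀ x, (∀ i ∈ s, ℓ i x ≤ 0) → x = 0) (w : ι → ℝ) :
    Bornology.IsBounded {x | ∀ i ∈ s, ℓ i x ≤ w i} := by
  rcases s.eq_empty_or_nonempty with rfl | hs
  · exact Bornology.isBounded_singleton.subset fun x _ => hℓ x (by simp)
  have hpos : ∀ u ∈ Metric.sphere (0 : E) 1, 0 < s.sup' hs fun i => ℓ i u := by
    intro u hu
    by_contra! hle
    have := hℓ u fun i hi => (Finset.le_sup' (fun i => ℓ i u) hi).trans hle
    simp [this] at hu
  obtain ⟨ε, hε, hεle⟩ := (isCompact_sphere (0 : E) 1).exists_forall_le'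
    (Continuous.finset_sup'_apply hs fun i _ => (ℓ i).continuous_of_finiteDimensional).continuousOn
    hpos
  refine (Metric.isBounded_closedBall (x := 0) (r := (∑ i ∈ s, |w i|) / ε)).subset fun x hx => ?_
  rw [mem_closedBall_zero_iff, le_div_iff₀ hε]
  rcases eq_or_ne x 0 with rfl | hx0
  · simpa using Finset.sum_nonneg fun i _ => abs_nonneg (w i)
  have hxn : ‖x‖ ≠ 0 := norm_ne_zero_iff.2 hx0
  obtain ⟨i, hi, hmax⟩ := s.exists_mem_eq_sup' hs fun i => ℓ i (‖x‖⁻¹ • x)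
  have hu : ‖x‖⁻¹ • x ∈ Metric.sphere (0 : E) 1 := by simp [norm_smul, hxn]
  calc ‖x‖ * ε ≤ ‖x‖ * ℓ i (‖x‖⁻¹ • x) := by
        gcongr; exact hmax ▸ hεle _ hu
    _ = ℓ i x := by rw [map_smul, smul_eq_mul, ← mul_assoc, mul_inv_cancel₀ hxn, one_mul]
    _ ≤ |w i| := (hx i hi).trans (le_abs_self _)
    _ ≤ ∑ i ∈ s, |w i| := Finset.single_le_sum (fun j _ => abs_nonneg (w j)) hi

theorem isCompact_setOf_forall_le_of_nonpos_imp_eq_zero (ℓ : ι → E →ₗ[ℝ] ℝ) (s : Finset ι)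
    (hℓ : ∀ x, (∀ i ∈ s, ℓ i x ≤ 0) → x = 0) (w : ι → ℝ) :
    IsCompact {x | ∀ i ∈ s, ℓ i x ≤ w i} := by
  refine Metric.isCompact_of_isClosed_isBounded ?_
    (isBounded_setOf_forall_le_of_nonpos_imp_eq_zero ℓ s hℓ w)
  simp only [ofPred_forall]
  exact isClosed_biInter fun i _ =>
    isClosed_le (ℓ i).continuous_of_finiteDimensional continuous_const

end LinearInequalities

theorem epiF_injective {nx : ℕ} : Function.Injective (epiF (nx := nx)) := by
  have key : ∀ M N : (Fin nx → ℝ) → EReal, epiF M ⊆ epiF N → N ≤ M := fun M N h x =>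
    EReal.le_of_forall_lt_iff_le.1 fun y hy => h (a := (x, y)) hy.le
  exact fun M N h => le_antisymm (key N M h.ge) (key M N h.le)

section Pset

variable {nx f : ℕ} (G : Matrix (Fin f) (Fin nx) ℝ) (h z : Fin f → ℝ)

theorem Pset_eq_preimage :
    Pset G h z = (G.mulVecLin.coprod (LinearMap.toSpanSingleton ℝ _ h)) ⁻¹' Iic z := by
  ext ⟨x, y⟩
  simp [Pset, Pi.le_def, mul_comm]

theorem isClosed_Pset : IsClosed (Pset G h z) := by
  rw [Pset_eq_preimage]
  exact isClosed_Iic.preimage (LinearMap.continuous_of_finiteDimensional _)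

theorem convex_Pset : Convex ℝ (Pset G h z) := by
  rw [Pset_eq_preimage]
  exact (convex_Iic z).linear_preimage _

end Pset

section Mform

variable {nx f f1 : ℕ} (hf1 : f1 < f) (G : Matrix (Fin f) (Fin nx) ℝ) (h z : Fin f → ℝ)

theorem Mform_ne_bot (x : Fin nx → ℝ) : Mform f1 hf1 G h z x ≠ ⊥ := by
  unfold Mform
  split_ifs <;> simp

theorem domF_Mform :
    domF (Mform f1 hf1 G h z) = {x | ∀ i : Fin f, (i : ℕ) < f1 → (G *ᵥ x) i ≤ z i} := by
  ext x
  simp only [domF, Mform, mem_ofPred_eq]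
  split_ifs with hx <;> simpa using hx

theorem epiF_Mform (hzero : ∀ i : Fin f, (i : ℕ) < f1 → h i = 0)
    (hneg : ∀ i : Fin f, f1 ≤ (i : ℕ) → h i < 0) :
    epiF (Mform f1 hf1 G h z) = Pset G h z := by
  ext ⟨x, y⟩
  simp only [epiF, Pset, mem_ofPred_eq]
  unfold Mform
  split_ifs with hx
  · rw [EReal.coe_le_coe_iff]
    refine (Finset.sup'_le_iff _ _).trans ?_
    simp only [Finset.mem_filter, Finset.mem_univ, true_and]
    refine forall_congr' fun i => ?_
    rcases lt_or_ge (i : ℕ) f1 with hi | hi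
    · simp [hi.not_ge, hzero i hi, hx i hi]
    · rw [div_le_iff_of_neg (hneg i hi), forall_prop_of_true hi]
      constructor <;> intro H <;> linarith
  · push Not at hx
    obtain ⟨i, hi, hlt⟩ := hx
    refine iff_of_false (by simp) fun H => ?_
    have := H i
    rw [hzero i hi, zero_mul] at this
    linarith

end Mform

/-- Remark 2: the explicit function
`M(x) = max_i (z₂ − G₂x)_i / (h₂)_i` on `{x | G₁x ≤ z₁}` (and `∞` otherwise)
satisfies `epi(M) = P(z)` and is the unique proper compact convex function with
this epigraph. -/
theorem stmt_1 {nx f : ℕ} (f1 : ℕ)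
    (G : Matrix (Fin f) (Fin nx) ℝ) (h : Fin f → ℝ)
    (hf1 : f1 < f)
    (hzero : ∀ i : Fin f, (i : ℕ) < f1 → h i = 0)
    (hneg : ∀ i : Fin f, f1 ≤ (i : ℕ) → h i < 0)
    (hG1 : ∀ x : Fin nx → ℝ, (∀ i : Fin f, (i : ℕ) < f1 → (G *ᵥ x) i ≤ 0) → x = 0)
    (z : Fin f → ℝ) (hne : (Pset G h z).Nonempty) :
    epiF (Mform f1 hf1 G h z) = Pset G h z ∧
      ProperCompactConvex (Mform f1 hf1 G h z) ∧
      ∀ M : (Fin nx → ℝ) → EReal,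
        ProperCompactConvex M → epiF M = Pset G h z → M = Mform f1 hf1 G h z := by
  have hepi := epiF_Mform hf1 G h z hzero hneg
  refine ⟨hepi, ⟨Mform_ne_bot hf1 G h z, ?_, ?_, hepi ▸ isClosed_Pset G h z,
    hepi ▸ convex_Pset G h z⟩, fun M _ hM => epiF_injective (hM.trans hepi.symm)⟩
  · obtain ⟨⟨x, y⟩, hxy⟩ := hne
    rw [← hepi] at hxy
    exact ⟨x, lt_of_le_of_lt hxy (EReal.coe_lt_top y)⟩
  · let ℓ : Fin f → (Fin nx → ℝ) →ₗ[ℝ] ℝ := fun i => LinearMap.proj i ∘ₗ G.mulVecLin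
    have := isCompact_setOf_forall_le_of_nonpos_imp_eq_zero ℓ
      (Finset.univ.filter fun i : Fin f => (i : ℕ) < f1) (by simpa [ℓ] using hG1) z
    rw [domF_Mform]
    simpa [ℓ] using this
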